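/- The disjoint union of P_3 with t copies of C_4 is a distance magic graph on n = 4t+3 vertices with magic constant n = 4t+3. -/

import Mathlib

open Finset
open scoped Classical

/-- The weight of a vertex `v`: the sum of the labels of its neighbors. -/
noncomputable def vertexWeight {V : Type} [Fintype V] (G : SimpleGraph V)
    (f : V → ℕ) (v : V) : ℕ :=
  ∑ u ∈ Finset.univ.filter (fun u => G.Adj v u), f u

/-- `G` is a distance magic graph with magic constant `k`: there is a bijective labeling of the
vertices by `{1, ..., n}` such that every vertex's neighborhood label-sum equals `k`. -/
def IsDistanceMagic {V : Type} [Fintype V] (G : SimpleGraph V) (k : ℕ) : Prop :=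
  ∃ f : V ≃ Fin (Fintype.card V),
    ∀ v : V, vertexWeight G (fun u => (f u : ℕ) + 1) v = k

/-- `k` is a magic constant: some (nonempty) graph realizes it. -/
def IsMagicConstant (k : ℕ) : Prop :=
  ∃ n : ℕ, 0 < n ∧ ∃ G : SimpleGraph (Fin n), IsDistanceMagic G k


/-- The disjoint union of `t` copies of the 4-cycle `C₄`. -/
def tC4graph (t : ℕ) : SimpleGraph (Fin t × Fin 4) where
  Adj x y := x.1 = y.1 ∧ (SimpleGraph.cycleGraph 4).Adj x.2 y.2
  symm := ⟨fun x y h => ⟨h.1.symm, (SimpleGraph.cycleGraph 4).adj_symm h.2⟩⟩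
  loopless := ⟨fun x h => (SimpleGraph.cycleGraph 4).irrefl h.2⟩

/-! Label `P₃` by `2t+1, n, 2t+2` with `n` in the middle, and the `i`-th copy of `C₄` by
`2i+1, 2i+2, n-(2i+1), n-(2i+2)` in cyclic order. The two neighbours of a vertex of `C₄` are
antipodal, and antipodal labels sum to `n`; in `P₃` the ends see `n` and the middle sees
`(2t+1) + (2t+2) = n`. -/

section Sum

variable {V W : Type} [Fintype V] [Fintype W] (G : SimpleGraph V) (H : SimpleGraph W)

theorem vertexWeight_sum_inl (f : V ⊕ W → ℕ) (v : V) :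
    vertexWeight (G ⊕g H) f (.inl v) = vertexWeight G (f ∘ .inl) v := by
  simp [vertexWeight, sum_filter, Fintype.sum_sum_type]

theorem vertexWeight_sum_inr (f : V ⊕ W → ℕ) (w : W) :
    vertexWeight (G ⊕g H) f (.inr w) = vertexWeight H (f ∘ .inr) w := by
  simp [vertexWeight, sum_filter, Fintype.sum_sum_type]

end Sum

theorem isDistanceMagic_of_injective {V : Type} [Fintype V] (G : SimpleGraph V) (k : ℕ)
    (f : V → ℕ) (hf : f.Injective) (hpos : ∀ v, 1 ≤ f v) (hle : ∀ v, f v ≤ Fintype.card V)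
    (hk : ∀ v, vertexWeight G f v = k) : IsDistanceMagic G k := by
  have hbij : Function.Bijective fun v =>
      (⟨f v - 1, by have := hpos v; have := hle v; omega⟩ : Fin (Fintype.card V)) := by
    rw [Fintype.bijective_iff_injective_and_card]
    refine ⟨fun u v huv => hf ?_, Fintype.card_fin _ |>.symm⟩
    have := hpos u; have := hpos v
    simp only [Fin.mk.injEq] at huv
    omega
  refine ⟨Equiv.ofBijective _ hbij, fun v => ?_⟩
  have hlabel : (fun u => (Equiv.ofBijective _ hbij u : ℕ) + 1) = f := by
    funext u
    simpa using Nat.sub_add_cancel (hpos u)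
  rw [hlabel, hk]

theorem tC4graph_adj {t : ℕ} {i i' : Fin t} {j j' : Fin 4} :
    (tC4graph t).Adj (i, j) (i', j') ↔ i' = i ∧ (j' = j + 1 ∨ j' = j - 1) := by
  have hcycle : (SimpleGraph.cycleGraph 4).Adj j j' ↔ j' = j + 1 ∨ j' = j - 1 := by
    revert j j'; decide
  simp [tC4graph, hcycle, eq_comm]

theorem vertexWeight_tC4graph {t : ℕ} (f : Fin t × Fin 4 → ℕ) (i : Fin t) (j : Fin 4) :
    vertexWeight (tC4graph t) f (i, j) = f (i, j + 1) + f (i, j - 1) := by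
  have hne : j + 1 ≠ j - 1 := by revert j; decide
  have hneighbors :
      univ.filter (fun u => (tC4graph t).Adj (i, j) u) = {(i, j + 1), (i, j - 1)} := by
    ext ⟨i', j'⟩
    simp [tC4graph_adj]
    tauto
  rw [vertexWeight, hneighbors, sum_pair (by simpa using hne)]

def magicLabel (t : ℕ) : Fin 3 ⊕ Fin t × Fin 4 → ℕ
  | .inl 0 => 2 * t + 1
  | .inl 1 => 4 * t + 3
  | .inl 2 => 2 * t + 2
  | .inr (i, 0) => 2 * i + 1
  | .inr (i, 1) => 2 * i + 2
  | .inr (i, 2) => 4 * t + 2 - 2 * i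
  | .inr (i, 3) => 4 * t + 1 - 2 * i

theorem magicLabel_injective (t : ℕ) : (magicLabel t).Injective := by
  rintro (a | ⟨i, j⟩) (b | ⟨i', j'⟩) h
  · fin_cases a <;> fin_cases b <;> simp [magicLabel] at h ⊢ <;> omega
  · have := i'.isLt
    fin_cases a <;> fin_cases j' <;> simp [magicLabel] at h <;> omega
  · have := i.isLt
    fin_cases j <;> fin_cases b <;> simp [magicLabel] at h <;> omega
  · have := i.isLt; have := i'.isLt
    fin_cases j <;> fin_cases j' <;> simp [magicLabel, Fin.ext_iff] at h ⊢ <;> omega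

theorem magicLabel_pos (t : ℕ) (v : Fin 3 ⊕ Fin t × Fin 4) : 1 ≤ magicLabel t v := by
  rcases v with a | ⟨i, j⟩
  · fin_cases a <;> simp [magicLabel]
  · have := i.isLt
    fin_cases j <;> simp [magicLabel] <;> omega

theorem magicLabel_le (t : ℕ) (v : Fin 3 ⊕ Fin t × Fin 4) : magicLabel t v ≤ 4 * t + 3 := by
  rcases v with a | ⟨i, j⟩
  · fin_cases a <;> simp [magicLabel] <;> omega
  · have := i.isLt
    fin_cases j <;> simp [magicLabel] <;> omega

theorem magicLabel_add_antipode (t : ℕ) (i : Fin t) (j : Fin 4) :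
    magicLabel t (.inr (i, j)) + magicLabel t (.inr (i, j + 2)) = 4 * t + 3 := by
  have := i.isLt
  fin_cases j <;> simp [magicLabel] <;> omega

theorem vertexWeight_magicLabel (t : ℕ) (v : Fin 3 ⊕ Fin t × Fin 4) :
    vertexWeight (SimpleGraph.pathGraph 3 ⊕g tC4graph t) (magicLabel t) v = 4 * t + 3 := by
  rcases v with a | ⟨i, j⟩
  · rw [vertexWeight_sum_inl]
    fin_cases a <;>
      simp [vertexWeight, sum_filter, Fin.sum_univ_three, SimpleGraph.pathGraph_adj, magicLabel]
    omega
  · rw [vertexWeight_sum_inr, vertexWeight_tC4graph]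
    have hantipode : j - 1 = j + 1 + 2 := by revert j; decide
    rw [hantipode]
    exact magicLabel_add_antipode t i (j + 1)

/-- `P₃ ∪ t C₄` is a distance magic graph on `n = 4t + 3` vertices with magic constant
`n = 4t + 3`. -/
theorem p3_union_tC4_distance_magic (t : ℕ) :
    Fintype.card (Fin 3 ⊕ Fin t × Fin 4) = 4 * t + 3 ∧
      IsDistanceMagic (SimpleGraph.pathGraph 3 ⊕g tC4graph t) (4 * t + 3) := by
  have hcard : Fintype.card (Fin 3 ⊕ Fin t × Fin 4) = 4 * t + 3 := by
    simp only [Fintype.card_sum, Fintype.card_prod, Fintype.card_fin]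
    ring
  exact ⟨hcard, isDistanceMagic_of_injective _ _ (magicLabel t) (magicLabel_injective t)
    (magicLabel_pos t) (fun v => hcard ▸ magicLabel_le t v) (vertexWeight_magicLabel t)⟩
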